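/- arXiv:1501.06157 — 4 statements merged into one kernel-verified Lean document; each statement's English description precedes it below -/
import Mathlib

section
/- Let m0, m1 ≥ 1 and let r : ℝ → ℝ solve r''(x) = α(x)·r'(x) - β(x)·sin(2r(x)) with α, β as above, and let Z be the unique zero of α (assume m0 ≥ 2 so Z exists). If W(x) = (1/2)·r'(x)² + β(x)·sin²(r(x)), then W is monotone nondecreasing on the interval [Z, ∞). -/
/-! The derivative of `W` along a solution is `α r'² + β' sin² r`: the terms coming from
`β sin(2r)` cancel. Both summands are nonnegative once `α ≥ 0`, and `α ≥ 0` exactly where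
`tanh x` exceeds `tanh Z`. -/

noncomputable def artanh (x : ℝ) : ℝ := (1/2) * Real.log ((1 + x) / (1 - x))

open Set

theorem artanh_eq_real_artanh {x : ℝ} (hx : x ∈ Icc (-1) 1) : artanh x = Real.artanh x :=
  (Real.artanh_eq_half_log hx).symm

theorem le_tanh_iff_artanh_le {c x : ℝ} (hc : c ∈ Ioo (-1) 1) :
    c ≤ Real.tanh x ↔ artanh c ≤ x := by
  rw [artanh_eq_real_artanh (Ioo_subset_Icc_self hc), ← Real.artanh_tanh x,
    Real.artanh_le_artanh_iff hc ⟨Real.neg_one_lt_tanh x, Real.tanh_lt_one x⟩, Real.artanh_tanh]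

theorem Real.hasDerivAt_tanh (x : ℝ) : HasDerivAt Real.tanh (Real.cosh x ^ 2)⁻¹ x := by
  rw [show Real.tanh = Real.sinh / Real.cosh from funext Real.tanh_eq_sinh_div_cosh]
  refine ((Real.hasDerivAt_sinh x).div (Real.hasDerivAt_cosh x)
    (Real.cosh_pos x).ne').congr_deriv ?_
  rw [← sq, ← sq, Real.cosh_sq_sub_sinh_sq, inv_eq_one_div]

section Lyapunov

variable {a b r r' : ℝ → ℝ}

theorem hasDerivAt_lyapunov {x db : ℝ} (hb : HasDerivAt b db x) (hr : HasDerivAt r (r' x) x)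
    (hr' : HasDerivAt r' (a x * r' x - b x * Real.sin (2 * r x)) x) :
    HasDerivAt (fun y => (1/2) * (r' y)^2 + b y * (Real.sin (r y))^2)
      (a x * r' x ^ 2 + db * Real.sin (r x) ^ 2) x := by
  have hsin_sq : HasDerivAt (fun y => Real.sin (r y) ^ 2)
      (2 * Real.sin (r x) ^ 1 * (Real.cos (r x) * r' x)) x :=
    ((Real.hasDerivAt_sin (r x)).comp x hr).pow 2
  refine ((hr'.pow 2).const_mul (1/2 : ℝ) |>.add (hb.mul hsin_sq)).congr_deriv ?_
  rw [Real.sin_two_mul]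
  ring

theorem monotoneOn_lyapunov {b' : ℝ → ℝ} {s : Set ℝ} (hs : Convex ℝ s)
    (hb : ∀ x ∈ s, HasDerivAt b (b' x) x) (hr : ∀ x ∈ s, HasDerivAt r (r' x) x)
    (hr' : ∀ x ∈ s, HasDerivAt r' (a x * r' x - b x * Real.sin (2 * r x)) x)
    (ha : ∀ x ∈ s, 0 ≤ a x) (hb' : ∀ x ∈ s, 0 ≤ b' x) :
    MonotoneOn (fun y => (1/2) * (r' y)^2 + b y * (Real.sin (r y))^2) s := by
  have hW : ∀ x ∈ s, HasDerivAt (fun y => (1/2) * (r' y)^2 + b y * (Real.sin (r y))^2)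
      (a x * r' x ^ 2 + b' x * Real.sin (r x) ^ 2) x := fun x hx =>
    hasDerivAt_lyapunov (hb x hx) (hr x hx) (hr' x hx)
  refine monotoneOn_of_hasDerivWithinAt_nonneg hs
    (fun x hx => (hW x hx).continuousAt.continuousWithinAt)
    (fun x hx => (hW x (interior_subset hx)).hasDerivWithinAt) fun x hx => ?_
  have hx := interior_subset hx
  exact add_nonneg (mul_nonneg (ha x hx) (sq_nonneg _)) (mul_nonneg (hb' x hx) (sq_nonneg _))

end Lyapunov

/-- The Lyapunov function W(x) = (1/2)·r'(x)² + β(x)·sin²(r(x)) is monotone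
nondecreasing on [Z, ∞), where Z is the unique zero of α. -/
theorem lyapunov_W_monotone (m0 m1 : ℕ) (hm0 : 2 ≤ m0) (hm1 : m0 ≤ m1)
    (α β : ℝ → ℝ)
    (hα : ∀ x, α x = (1/2) * (((m0:ℝ) + m1 - 2) * Real.tanh x + m1 - m0))
    (hβ : ∀ x, β x = (1/4) * (((m0:ℝ) + m1) * Real.tanh x + m1 - m0))
    (r r' : ℝ → ℝ)
    (hr : ∀ x, HasDerivAt r (r' x) x)
    (hr' : ∀ x, HasDerivAt r' (α x * r' x - β x * Real.sin (2 * r x)) x) :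
    MonotoneOn (fun y => (1/2) * (r' y)^2 + β y * (Real.sin (r y))^2)
      (Set.Ici (artanh (((m0:ℝ) - m1) / ((m0:ℝ) + m1 - 2)))) := by
  have hm0' : (2:ℝ) ≤ m0 := by exact_mod_cast hm0
  have hm1' : (m0:ℝ) ≤ m1 := by exact_mod_cast hm1
  have hden : 0 < (m0:ℝ) + m1 - 2 := by linarith
  have hZ : ((m0:ℝ) - m1) / ((m0:ℝ) + m1 - 2) ∈ Ioo (-1) 1 :=
    ⟨by rw [lt_div_iff₀ hden]; linarith, by rw [div_lt_iff₀ hden]; linarith⟩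
  have hβ' : ∀ x, HasDerivAt β ((1/4) * (((m0:ℝ) + m1) * (Real.cosh x ^ 2)⁻¹)) x := by
    intro x
    rw [funext hβ]
    exact (((Real.hasDerivAt_tanh x).const_mul _).add_const _ |>.sub_const _).const_mul _
  refine monotoneOn_lyapunov (convex_Ici _) (fun x _ => hβ' x) (fun x _ => hr x)
    (fun x _ => hr' x) (fun x hx => ?_) fun x _ => by positivity
  have htanh := (le_tanh_iff_artanh_le hZ).2 hx
  rw [div_le_iff₀ hden] at htanh
  rw [hα]
  linarith
end

section
/- Let m1 ≥ 2 and let r be a solution of the (m0,m1)-ODE such that lim_{x→∞} r'(x) = 0 and lim_{x→∞} r(x) = L exists with L finite. Then L = ℓ·π or L = ℓ·π + π/2 for some integer ℓ. -/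
open Filter Real

lemma tanh_tendsto_one : Tendsto Real.tanh atTop (nhds 1) := by
  have key : ∀ x : ℝ, Real.tanh x = (1 - Real.exp (-x)^2) / (1 + Real.exp (-x)^2) := by
    intro x
    rw [Real.tanh_eq_sinh_div_cosh, Real.sinh_eq, Real.cosh_eq]
    have h1 : Real.exp x * Real.exp (-x) = 1 := by
      rw [← Real.exp_add]; simp
    have h2 : Real.exp x + Real.exp (-x) > 0 := by positivity
    have h3 : (1:ℝ) + Real.exp (-x)^2 > 0 := by positivity
    field_simp
    nlinarith [h1]
  have h0 : Tendsto (fun x : ℝ => Real.exp (-x)^2) atTop (nhds 0) := by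
    have := Real.tendsto_exp_neg_atTop_nhds_zero
    simpa [sq] using this.mul this
  have : Tendsto (fun x : ℝ => (1 - Real.exp (-x)^2) / (1 + Real.exp (-x)^2)) atTop
      (nhds ((1 - 0) / (1 + 0))) := by
    exact ((tendsto_const_nhds.sub h0).div (tendsto_const_nhds.add h0) (by norm_num))
  simpa using this.congr fun x => (key x).symm

lemma deriv_lim_zero (f f' : ℝ → ℝ) (hf : ∀ x, HasDerivAt f (f' x) x) (c L : ℝ)
    (hf' : Tendsto f' atTop (nhds c)) (hfL : Tendsto f atTop (nhds L)) : c = 0 := by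
  have hsel : ∀ n : ℕ, ∃ ξ ∈ Set.Ioo (n:ℝ) (n+1), f' ξ = (f (n+1) - f n) / ((n+1) - n) := by
    intro n
    apply exists_hasDerivAt_eq_slope f f' (by linarith [Nat.cast_nonneg (α := ℝ) n])
    · exact fun x _ => (hf x).continuousAt.continuousWithinAt
    · exact fun x _ => hf x
  choose ξ hξ hval using hsel
  have hξtop : Tendsto ξ atTop atTop :=
    tendsto_atTop_mono (fun n => le_of_lt (hξ n).1) tendsto_natCast_atTop_atTop
  have h1 : Tendsto (fun n => f' (ξ n)) atTop (nhds c) := hf'.comp hξtop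
  have h2 : Tendsto (fun n => f' (ξ n)) atTop (nhds 0) := by
    have ha : Tendsto (fun n : ℕ => f ((n:ℝ)+1)) atTop (nhds L) := by
      apply hfL.comp
      apply tendsto_atTop_mono (fun n : ℕ => by linarith [le_refl ((n:ℝ))] : ∀ n : ℕ, (n:ℝ) ≤ (n:ℝ)+1) tendsto_natCast_atTop_atTop
    have hb : Tendsto (fun n : ℕ => f (n:ℝ)) atTop (nhds L) := hfL.comp tendsto_natCast_atTop_atTop
    have := ha.sub hb
    simp only [sub_self] at this
    apply Tendsto.congr _ this
    intro n
    rw [hval n]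
    simp
  exact tendsto_nhds_unique h1 h2

/-- If m1 ≥ 2 and r solves the (m0,m1)-ODE with r'(x) → 0 and r(x) → L (finite)
as x → ∞, then L = ℓπ or L = ℓπ + π/2 for some integer ℓ. -/
theorem limit_is_half_integer_multiple_of_pi (m0 m1 : ℕ) (hm0 : 1 ≤ m0) (hm1 : 2 ≤ m1)
    (α β : ℝ → ℝ)
    (hα : ∀ x, α x = (1/2) * (((m0:ℝ) + m1 - 2) * Real.tanh x + m1 - m0))
    (hβ : ∀ x, β x = (1/4) * (((m0:ℝ) + m1) * Real.tanh x + m1 - m0))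
    (r r' : ℝ → ℝ)
    (hr : ∀ x, HasDerivAt r (r' x) x)
    (hr' : ∀ x, HasDerivAt r' (α x * r' x - β x * Real.sin (2 * r x)) x)
    (L : ℝ)
    (hlim' : Tendsto r' atTop (nhds 0))
    (hlim : Tendsto r atTop (nhds L)) :
    ∃ ℓ : ℤ, L = ℓ * Real.pi ∨ L = ℓ * Real.pi + Real.pi / 2 := by
  -- limits of α, β
  have htanh := tanh_tendsto_one
  have hαlim : Tendsto α atTop (nhds ((m1:ℝ) - 1)) := by
    have : Tendsto (fun x => (1/2) * (((m0:ℝ) + m1 - 2) * Real.tanh x + m1 - m0)) atTop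
        (nhds ((1/2) * (((m0:ℝ) + m1 - 2) * 1 + m1 - m0))) := by
      exact (((tendsto_const_nhds.mul htanh).add tendsto_const_nhds).sub tendsto_const_nhds).const_mul _
    have h2 : (1/2 : ℝ) * (((m0:ℝ) + m1 - 2) * 1 + m1 - m0) = (m1:ℝ) - 1 := by ring
    rw [h2] at this
    exact this.congr fun x => (hα x).symm
  have hβlim : Tendsto β atTop (nhds ((m1:ℝ) / 2)) := by
    have : Tendsto (fun x => (1/4) * (((m0:ℝ) + m1) * Real.tanh x + m1 - m0)) atTop
        (nhds ((1/4) * (((m0:ℝ) + m1) * 1 + m1 - m0))) := by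
      exact (((tendsto_const_nhds.mul htanh).add tendsto_const_nhds).sub tendsto_const_nhds).const_mul _
    have h2 : (1/4 : ℝ) * (((m0:ℝ) + m1) * 1 + m1 - m0) = (m1:ℝ)/2 := by ring
    rw [h2] at this
    exact this.congr fun x => (hβ x).symm
  have hsinlim : Tendsto (fun x => Real.sin (2 * r x)) atTop (nhds (Real.sin (2 * L))) :=
    (Real.continuous_sin.tendsto _).comp ((hlim.const_mul 2))
  have hr''lim : Tendsto (fun x => α x * r' x - β x * Real.sin (2 * r x)) atTop
      (nhds (((m1:ℝ) - 1) * 0 - (m1:ℝ)/2 * Real.sin (2 * L))) :=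
    (hαlim.mul hlim').sub (hβlim.mul hsinlim)
  have hc : ((m1:ℝ) - 1) * 0 - (m1:ℝ)/2 * Real.sin (2 * L) = 0 :=
    deriv_lim_zero r' _ hr' _ 0 hr''lim hlim'
  have hm1pos : (0:ℝ) < (m1:ℝ)/2 := by positivity
  have hsin : Real.sin (2 * L) = 0 := by
    have h2 : (m1:ℝ)/2 * Real.sin (2 * L) = 0 := by linarith
    exact (mul_eq_zero.mp h2).resolve_left (ne_of_gt hm1pos)
  rw [Real.sin_eq_zero_iff] at hsin
  obtain ⟨k, hk⟩ := hsin
  rcases Int.even_or_odd k with ⟨ℓ, hℓ⟩ | ⟨ℓ, hℓ⟩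
  · refine ⟨ℓ, Or.inl ?_⟩
    have : (k:ℝ) = 2 * ℓ := by rw [hℓ]; push_cast; ring
    rw [this] at hk; linarith
  · refine ⟨ℓ, Or.inr ?_⟩
    have : (k:ℝ) = 2 * ℓ + 1 := by rw [hℓ]; push_cast; ring
    rw [this] at hk; linarith
end

section
/- Let m1 ≥ 2, B = m1/(2(m1-1)), and let r solve the (m0,m1)-ODE. Suppose c ∈ ℝ satisfies c > Z_α and |β(x)/α(x)| ≤ B for all x ≥ c (where Z_α is the unique zero of α). If r'(x0) > B for some x0 > c, then r''(x) > 0 for all x ≥ x0; consequently r'(x) ≥ r'(x0) > B for all x ≥ x0 and lim_{x→∞} r(x) = ∞. -/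
open Filter

open Set Topology

/-!
Past the zero of `α` we have `α > 0`, so `|β sin (2r)| ≤ B α` and hence
`r'' ≥ α (r' - B) > 0` as long as `r' > B`. Hence `r'` can never come back down to `r'(x₀)`:
right after any point where `r' ≥ r'(x₀) > B` it strictly increases. So `r` grows at least
linearly with slope `r'(x₀) > B ≥ 0` (`B` bounds an absolute value).
-/

lemma lt_tanh_of_artanh_lt {k x : ℝ} (hk : k ∈ Ioo (-1) 1) (h : artanh k < x) :
    k < Real.tanh x := by
  rw [artanh, ← Real.artanh_eq_half_log (Ioo_subset_Icc_self hk)] at h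
  rwa [← Real.artanh_lt_artanh_iff hk ⟨Real.neg_one_lt_tanh x, Real.tanh_lt_one x⟩,
    Real.artanh_tanh]

lemma alpha_pos_of_artanh_lt {m₀ m₁ x : ℝ} (hm₀ : 1 < m₀) (hm₁ : 1 < m₁)
    (hx : artanh ((m₀ - m₁) / (m₀ + m₁ - 2)) < x) :
    0 < (m₀ + m₁ - 2) * Real.tanh x + m₁ - m₀ := by
  have hden : 0 < m₀ + m₁ - 2 := by linarith
  have hk : (m₀ - m₁) / (m₀ + m₁ - 2) ∈ Ioo (-1) 1 := by
    constructor
    · rw [lt_div_iff₀ hden]; linarith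
    · rw [div_lt_one hden]; linarith
  have ht := lt_tanh_of_artanh_lt hk hx
  rw [div_lt_iff₀ hden] at ht
  linarith

lemma mul_sub_mul_sin_pos {a b B p : ℝ} (θ : ℝ) (ha : 0 < a) (hb : |b / a| ≤ B) (hp : B < p) :
    0 < a * p - b * Real.sin θ := by
  rw [abs_div, abs_of_pos ha, div_le_iff₀ ha] at hb
  have hsin : b * Real.sin θ ≤ |b| := by
    calc b * Real.sin θ ≤ |b * Real.sin θ| := le_abs_self _
      _ = |b| * |Real.sin θ| := abs_mul _ _
      _ ≤ |b| * 1 := by gcongr; exact Real.abs_sin_le_one θ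
      _ = |b| := mul_one _
  nlinarith

lemma apply_le_apply_of_hasDerivAt_pos {g g' : ℝ → ℝ} {a b : ℝ}
    (hg : ∀ x, HasDerivAt g (g' x) x) (hpos : ∀ x, a ≤ x → g a ≤ g x → 0 < g' x)
    (hab : a ≤ b) : g a ≤ g b := by
  have hcont : Continuous g := continuous_iff_continuousAt.2 fun x ↦ (hg x).continuousAt
  have hsub : Icc a b ⊆ {x | g a ≤ g x} := by
    refine IsClosed.Icc_subset_of_forall_mem_nhdsWithin
      ((isClosed_le continuous_const hcont).inter isClosed_Icc) (le_refl (g a)) ?_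
    rintro x ⟨hx, hxa, -⟩
    have hslope : ∀ᶠ y in 𝓝[>] x, 0 < slope g x y :=
      ((hg x).tendsto_slope.mono_left (nhdsWithin_mono x fun _ h ↦ ne_of_gt h)).eventually
        (lt_mem_nhds (hpos x hxa hx))
    filter_upwards [hslope, self_mem_nhdsWithin] with y hy hxy
    rw [slope_def_field, div_pos_iff_of_pos_right (sub_pos.2 hxy)] at hy
    exact hx.trans (sub_pos.1 hy).le
  exact hsub ⟨hab, le_rfl⟩

lemma tendsto_atTop_of_le_hasDerivAt {f f' : ℝ → ℝ} {a C : ℝ}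
    (hf : ∀ x, HasDerivAt f (f' x) x) (hC : 0 < C) (hf' : ∀ x, a ≤ x → C ≤ f' x) :
    Tendsto f atTop atTop := by
  have hdiff : Differentiable ℝ f := fun x ↦ (hf x).differentiableAt
  have hlin : ∀ x, a ≤ x → C * (x - a) ≤ f x - f a := by
    refine fun x hx ↦ (convex_Ici a).mul_sub_le_image_sub_of_le_deriv hdiff.continuous.continuousOn
      hdiff.differentiableOn ?_ a self_mem_Ici x hx hx
    rw [interior_Ici]
    exact fun y hy ↦ (hf y).deriv ▸ hf' y hy.le
  refine tendsto_atTop_mono' atTop (eventually_atTop.2 ⟨a, fun x hx ↦ ?_⟩)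
    (tendsto_atTop_add_const_left atTop (f a)
      ((tendsto_atTop_add_const_right atTop (-a) tendsto_id).const_mul_atTop hC))
  have := hlin x hx
  simp only [id, ← sub_eq_add_neg]
  linarith

theorem blow_up_of_large_slope_general (m0 m1 : ℕ) (hm0 : 2 ≤ m0) (hm1 : 2 ≤ m1)
    (α β : ℝ → ℝ)
    (hα : ∀ x, α x = (1/2) * (((m0:ℝ) + m1 - 2) * Real.tanh x + m1 - m0))
    (B : ℝ)
    (r r' : ℝ → ℝ)
    (hr : ∀ x, HasDerivAt r (r' x) x)
    (hr' : ∀ x, HasDerivAt r' (α x * r' x - β x * Real.sin (2 * r x)) x)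
    (c : ℝ) (hc : artanh (((m0:ℝ) - m1) / ((m0:ℝ) + m1 - 2)) < c)
    (hquot : ∀ x : ℝ, c ≤ x → |β x / α x| ≤ B)
    (x0 : ℝ) (hx0 : c < x0) (hslope : B < r' x0) :
    (∀ x : ℝ, x0 ≤ x → 0 < α x * r' x - β x * Real.sin (2 * r x)) ∧
      (∀ x : ℝ, x0 ≤ x → r' x0 ≤ r' x) ∧
      Tendsto r atTop atTop := by
  have hαpos : ∀ x, c ≤ x → 0 < α x := fun x hx ↦ by
    rw [hα]
    exact mul_pos one_half_pos (alpha_pos_of_artanh_lt (by exact_mod_cast hm0)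
      (by exact_mod_cast hm1) (hc.trans_le hx))
  have hpos : ∀ x, x0 ≤ x → B < r' x → 0 < α x * r' x - β x * Real.sin (2 * r x) :=
    fun x hx ↦ mul_sub_mul_sin_pos _ (hαpos x (hx0.le.trans hx)) (hquot x (hx0.le.trans hx))
  have hmono : ∀ x, x0 ≤ x → r' x0 ≤ r' x := fun x ↦
    apply_le_apply_of_hasDerivAt_pos hr' fun y hy h ↦ hpos y hy (hslope.trans_le h)
  have hB : 0 ≤ B := (abs_nonneg _).trans (hquot c le_rfl)
  exact ⟨fun x hx ↦ hpos x hx (hslope.trans_le (hmono x hx)), hmono,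
    tendsto_atTop_of_le_hasDerivAt hr (hB.trans_lt hslope) hmono⟩

/-- If |β/α| ≤ B = m1/(2(m1-1)) beyond c > Z_α and r'(x0) > B at some x0 > c,
then r'' > 0 on [x0,∞), hence r' ≥ r'(x0) > B there and r(x) → ∞. -/
theorem blow_up_of_large_slope (m0 m1 : ℕ) (hm0 : 2 ≤ m0) (hm1 : 2 ≤ m1)
    (α β : ℝ → ℝ)
    (hα : ∀ x, α x = (1/2) * (((m0:ℝ) + m1 - 2) * Real.tanh x + m1 - m0))
    (hβ : ∀ x, β x = (1/4) * (((m0:ℝ) + m1) * Real.tanh x + m1 - m0))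
    (B : ℝ) (hB : B = (m1:ℝ) / (2 * ((m1:ℝ) - 1)))
    (r r' : ℝ → ℝ)
    (hr : ∀ x, HasDerivAt r (r' x) x)
    (hr' : ∀ x, HasDerivAt r' (α x * r' x - β x * Real.sin (2 * r x)) x)
    (c : ℝ) (hc : artanh (((m0:ℝ) - m1) / ((m0:ℝ) + m1 - 2)) < c)
    (hquot : ∀ x : ℝ, c ≤ x → |β x / α x| ≤ B)
    (x0 : ℝ) (hx0 : c < x0) (hslope : B < r' x0) :
    (∀ x : ℝ, x0 ≤ x → 0 < α x * r' x - β x * Real.sin (2 * r x)) ∧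
      (∀ x : ℝ, x0 ≤ x → r' x0 ≤ r' x) ∧
      Tendsto r atTop atTop :=
  blow_up_of_large_slope_general m0 m1 hm0 hm1 α β hα B r r' hr hr' c hc hquot x0 hx0 hslope
end

section
/- Let m0 ≥ 6, m1 ≥ 2, and define h(t,x) = -sin²t + (1/2)·α_{m1,m0}(x)·sin(2t) - m0·cos²t, where α_{m1,m0}(x) = (1/2)((m0+m1-2)·tanh x + m0-m1). Let t0 = -arccos(-1/√(1+m0)) and x0 = artanh((4√m0 + m1 - m0)/(m0+m1-2)). Then h(t0, x0) = 0, and for all x > x0 and all integers k, h(t0 + kπ, x) > 0. -/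
lemma tanh_eq' (x : ℝ) :
    Real.tanh x = (Real.exp (2*x) - 1) / (Real.exp (2*x) + 1) := by
  have he : 0 < Real.exp x := Real.exp_pos x
  have h2 : Real.exp (2*x) = Real.exp x * Real.exp x := by
    rw [two_mul, Real.exp_add]
  rw [Real.tanh_eq_sinh_div_cosh, Real.sinh_eq, Real.cosh_eq, Real.exp_neg, h2]
  have hden : Real.exp x * Real.exp x + 1 > 0 := by positivity
  field_simp

lemma tanh_strictMono : StrictMono Real.tanh := by
  intro a b hab
  rw [tanh_eq', tanh_eq']
  have h1 : (0:ℝ) < Real.exp (2*a) := Real.exp_pos _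
  have h2 : (0:ℝ) < Real.exp (2*b) := Real.exp_pos _
  have h3 : Real.exp (2*a) < Real.exp (2*b) := Real.exp_lt_exp.2 (by linarith)
  rw [div_lt_div_iff₀ (by linarith) (by linarith)]
  nlinarith

lemma tanh_artanh {y : ℝ} (h1 : -1 < y) (h2 : y < 1) :
    Real.tanh (artanh y) = y := by
  have hy1 : (0:ℝ) < 1 + y := by linarith
  have hy2 : (0:ℝ) < 1 - y := by linarith
  have hE : Real.exp (2 * artanh y) = (1 + y) / (1 - y) := by
    have : 2 * artanh y = Real.log ((1 + y) / (1 - y)) := by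
      unfold artanh; ring
    rw [this, Real.exp_log (by positivity)]
  rw [tanh_eq', hE]
  have hne : (1:ℝ) - y ≠ 0 := ne_of_gt hy2
  rw [div_sub_one hne, div_add_one hne]
  have e1 : 1 + y - (1 - y) = 2 * y := by ring
  have e2 : 1 + y + (1 - y) = 2 := by ring
  rw [e1, e2, div_div_div_cancel_right₀]
  · ring
  · exact hne


set_option maxHeartbeats 1000000 in
/-- For m0 ≥ 6, with h(t,x) = -sin²t + (1/2)α_{m1,m0}(x)sin(2t) - m0cos²t,
t0 = -arccos(-1/√(1+m0)) and x0 = artanh((4√m0+m1-m0)/(m0+m1-2)):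
h(t0,x0) = 0 and h(t0+kπ, x) > 0 for all x > x0 and all integers k. -/
theorem h_zero_and_positive (m0 m1 : ℕ) (hm0 : 6 ≤ m0) (hm1 : 2 ≤ m1)
    (harg : 4 * Real.sqrt m0 + (m1:ℝ) - m0 ∈
      Set.Ioo (-((m0:ℝ) + m1 - 2)) ((m0:ℝ) + m1 - 2))
    (α : ℝ → ℝ)
    (hα : ∀ x, α x = (1/2) * (((m0:ℝ) + m1 - 2) * Real.tanh x + m0 - m1))
    (h : ℝ → ℝ → ℝ)
    (hh : ∀ t x, h t x =
      -(Real.sin t)^2 + (1/2) * α x * Real.sin (2 * t) - m0 * (Real.cos t)^2)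
    (t0 : ℝ) (ht0 : t0 = -Real.arccos (-(1 / Real.sqrt (1 + (m0:ℝ)))))
    (x0 : ℝ)
    (hx0 : x0 = artanh ((4 * Real.sqrt m0 + (m1:ℝ) - m0) / ((m0:ℝ) + m1 - 2))) :
    h t0 x0 = 0 ∧ ∀ x : ℝ, x0 < x → ∀ k : ℤ, 0 < h (t0 + k * Real.pi) x := by
  set M : ℝ := (m0:ℝ) with hM
  have hM6 : (6:ℝ) ≤ M := by rw [hM]; exact_mod_cast hm0
  have hM1 : (2:ℝ) ≤ (m1:ℝ) := by exact_mod_cast hm1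
  have hMpos : (0:ℝ) < M := by linarith
  have hD : (0:ℝ) < M + (m1:ℝ) - 2 := by linarith
  set r : ℝ := Real.sqrt M with hr
  set s : ℝ := Real.sqrt (1 + M) with hs
  have hr2 : r ^ 2 = M := Real.sq_sqrt (le_of_lt hMpos)
  have hs2 : s ^ 2 = 1 + M := Real.sq_sqrt (by linarith)
  have hrpos : 0 < r := Real.sqrt_pos.2 hMpos
  have hspos : 0 < s := Real.sqrt_pos.2 (by linarith)
  have hs1 : 1 ≤ s := by nlinarith
  -- cos t0 and sin t0
  have h1s : 1 / s ≤ 1 := by rw [div_le_one hspos]; exact hs1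
  have h0s : 0 < 1 / s := one_div_pos.2 hspos
  have hcos : Real.cos t0 = -(1 / s) := by
    rw [ht0, Real.cos_neg, Real.cos_arccos]
    · linarith
    · linarith
  have hsin : Real.sin t0 = -(r / s) := by
    rw [ht0, Real.sin_neg, Real.sin_arccos, neg_eq_iff_eq_neg, neg_neg]
    have e1 : 1 - (-(1 / s)) ^ 2 = (r / s) ^ 2 := by
      field_simp
      nlinarith
    rw [e1, Real.sqrt_sq (by positivity)]
  -- cos(2t0) and sin(2t0)
  have hcos2 : Real.cos (2 * t0) = (1 - M) / (1 + M) := by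
    rw [Real.cos_two_mul, hcos]
    field_simp
    nlinarith
  have hsin2 : Real.sin (2 * t0) = 2 * r / (1 + M) := by
    rw [Real.sin_two_mul, hsin, hcos]
    field_simp
    nlinarith
  -- rewrite h in terms of double angles
  have key : ∀ t x, h t x = -(1/2) + Real.cos (2*t)/2 + (1/2) * α x * Real.sin (2*t)
      - M * (1/2 + Real.cos (2*t)/2) := by
    intro t x
    rw [hh, Real.sin_sq, Real.cos_sq]
    ring
  -- periodicity
  have hper : ∀ x, ∀ k : ℤ, h (t0 + k * Real.pi) x = h t0 x := by
    intro x k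
    rw [key, key]
    have e : 2 * (t0 + k * Real.pi) = 2 * t0 + k * (2 * Real.pi) := by ring
    rw [e, Real.sin_add_int_mul_two_pi, Real.cos_add_int_mul_two_pi]
  -- value of h t0 x
  have hval : ∀ x, h t0 x = (α x * r - 2 * M) / (1 + M) := by
    intro x
    rw [key, hcos2, hsin2]
    field_simp
    ring
  -- α x0 = 2r
  have hαx0 : α x0 = 2 * r := by
    obtain ⟨h1, h2⟩ := harg
    have hy1 : -1 < (4 * r + (m1:ℝ) - M) / (M + (m1:ℝ) - 2) := by
      rw [lt_div_iff₀ hD]; linarith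
    have hy2 : (4 * r + (m1:ℝ) - M) / (M + (m1:ℝ) - 2) < 1 := by
      rw [div_lt_one hD]; linarith
    rw [hα, hx0, tanh_artanh hy1 hy2,
      mul_div_cancel₀ _ (ne_of_gt hD)]
    ring
  constructor
  · rw [hval, hαx0, div_eq_zero_iff]
    left
    nlinarith
  · intro x hx k
    rw [hper, hval]
    have htanh : Real.tanh x0 < Real.tanh x := tanh_strictMono hx
    have hαx : 2 * r < α x := by
      have e0 : α x0 = 2 * r := hαx0
      rw [hα] at e0 ⊢
      nlinarith
    have h2M : 2 * M < α x * r := by nlinarith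
    apply div_pos <;> linarith
end
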